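/- Let u > 0, κ ≥ 0, 0 < λ ≤ 2κ with u ≥ λ/(4κ), N1 ≥ 2 and let x^{opt} = ((4uκ − λ)/(2u²)) e₁ ∈ ℝ^{N1}. Then for all x ∈ ℝ^{N1}, (1/2)(u x₁ + u x₂ − 2κ)² + (λ/2)‖x‖₁ ≥ (1/2)(u x₁^{opt} + u x₂^{opt} − 2κ)² + (λ/2)‖x^{opt}‖₁, i.e., x^{opt} is a global minimizer of the LASSO objective with equal weights u₁ = u₂ = u. -/

import Mathlib

/-!
Both the objective and the candidate depend on the first two coordinates only through
`s = x₀ + x₁`, and `‖x‖₁ ≥ |s|`, so it suffices to minimise the scalar function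
`½ (u s − 2κ)² + (λ/2) |s|`. At `a = (4uκ − λ)/(2u²) ≥ 0` the derivative of the quadratic
part is `u (u a − 2κ) = −λ/2`, which cancels against the subgradient `λ/2` of `(λ/2)|·|` at
`a`; convexity of the square and `s ≤ |s|` then give global optimality.
-/

open Finset

theorem scalar_lasso_le_of_optimality {u c lam a : ℝ} (ha : 0 ≤ a) (hlam : 0 ≤ lam)
    (hopt : u * (c - u * a) = lam / 2) (s : ℝ) :
    1 / 2 * (u * a - c) ^ 2 + lam / 2 * |a| ≤ 1 / 2 * (u * s - c) ^ 2 + lam / 2 * |s| := by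
  have hquad : 1 / 2 * (u * s - c) ^ 2
      = 1 / 2 * (u * a - c) ^ 2 - lam / 2 * (s - a) + 1 / 2 * (u * s - u * a) ^ 2 := by
    rw [← hopt]
    ring
  have habs : lam / 2 * s ≤ lam / 2 * |s| :=
    mul_le_mul_of_nonneg_left (le_abs_self s) (by positivity)
  rw [abs_of_nonneg ha, hquad]
  linarith [sq_nonneg (u * s - u * a)]

theorem abs_add_le_sum_abs {ι : Type*} [Fintype ι] (x : ι → ℝ) {i j : ι} (hij : i ≠ j) :
    |x i + x j| ≤ ∑ k, |x k| :=
  (abs_add_le _ _).trans <| add_le_sum (fun k _ ↦ abs_nonneg (x k)) (mem_univ i) (mem_univ j) hij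

theorem stmt_19 (N1 : ℕ) (hN : 2 ≤ N1) (u κ lam : ℝ)
    (hu : 0 < u) (hlam0 : 0 < lam) (hlam : lam ≤ 2 * κ)
    (hcond : lam / (4 * κ) ≤ u) :
    let xopt : Fin N1 → ℝ := fun i => if (i : ℕ) = 0 then (4 * u * κ - lam) / (2 * u ^ 2) else 0
    ∀ x : Fin N1 → ℝ,
      (1 / 2) * (u * xopt ⟨0, by omega⟩ + u * xopt ⟨1, by omega⟩ - 2 * κ) ^ 2
          + (lam / 2) * (∑ i, |xopt i|) ≤
        (1 / 2) * (u * x ⟨0, by omega⟩ + u * x ⟨1, by omega⟩ - 2 * κ) ^ 2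
          + (lam / 2) * (∑ i, |x i|) := by
  intro xopt x
  set a := (4 * u * κ - lam) / (2 * u ^ 2)
  have hlam_le : lam ≤ 4 * u * κ := by
    have := (div_le_iff₀ (by linarith : (0 : ℝ) < 4 * κ)).mp hcond
    linarith
  have ha : 0 ≤ a := div_nonneg (by linarith) (by positivity)
  have hopt : u * (2 * κ - u * a) = lam / 2 := by
    simp only [a]
    field_simp
    ring
  have hsum : ∑ i, |xopt i| = |a| := by
    rw [Fintype.sum_eq_single ⟨0, by omega⟩ fun i hi ↦ ?_]
    · simp [xopt, a]
    · simp [xopt, Fin.ext_iff.not.mp hi]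
  have hxopt : u * xopt ⟨0, by omega⟩ + u * xopt ⟨1, by omega⟩ = u * a := by simp [xopt, a]
  rw [hxopt, hsum]
  calc _ ≤ 1 / 2 * (u * (x ⟨0, by omega⟩ + x ⟨1, by omega⟩) - 2 * κ) ^ 2
        + lam / 2 * |x ⟨0, by omega⟩ + x ⟨1, by omega⟩| :=
        scalar_lasso_le_of_optimality ha hlam0.le hopt _
    _ ≤ _ := by
        rw [mul_add]
        gcongr
        exact abs_add_le_sum_abs x (by simp [Fin.ext_iff])
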